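/- Let q > 2 and consider the 2×2 real matrices B = [[q-1,0],[1,q-2]] and D = [[-1,1],[0,q-1]]² = [[1,q-2],[0,(q-1)²]]. If w ≠ w' are distinct words in the free semigroup on {B, D} (of possibly different lengths), then w·v₀ ≠ w'·v₀ where v₀ = (q(q-1), q(q-1)²)ᵀ. -/
import Mathlib

def wordMatrix (B D : Matrix (Fin 2) (Fin 2) ℝ) (w : List Bool) :
    Matrix (Fin 2) (Fin 2) ℝ :=
  ((w.map fun c => if c then B else D).reverse).prod

/-- vector of a reversed word -/
def vecW (q : ℝ) : List Bool → Fin 2 → ℝ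
  | [] => ![q * (q - 1), q * (q - 1) ^ 2]
  | (a :: u) =>
      (if a then !![q - 1, 0; 1, q - 2] else !![1, q - 2; 0, (q - 1) ^ 2]).mulVec (vecW q u)

lemma vecW_true (q : ℝ) (u : List Bool) :
    vecW q (true :: u) 0 = (q - 1) * vecW q u 0 ∧
    vecW q (true :: u) 1 = vecW q u 0 + (q - 2) * vecW q u 1 := by
  constructor <;>
  simp [vecW, Matrix.mulVec, dotProduct, Fin.sum_univ_two]

lemma vecW_false (q : ℝ) (u : List Bool) :
    vecW q (false :: u) 0 = vecW q u 0 + (q - 2) * vecW q u 1 ∧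
    vecW q (false :: u) 1 = (q - 1) ^ 2 * vecW q u 1 := by
  constructor <;>
  simp [vecW, Matrix.mulVec, dotProduct, Fin.sum_univ_two]

lemma vecW_inv (q : ℝ) (hq : 2 < q) :
    ∀ u : List Bool, 0 < vecW q u 1 ∧ vecW q u 0 < vecW q u 1 ∧ vecW q u 1 < q * vecW q u 0 := by
  intro u
  induction u with
  | nil =>
      simp only [vecW, Matrix.cons_val_zero, Matrix.cons_val_one, Matrix.head_cons]
      refine ⟨by nlinarith, by nlinarith, by nlinarith⟩
  | cons a t ih =>
      obtain ⟨h1, h2, h3⟩ := ih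
      have hx : 0 < vecW q t 0 := by nlinarith
      cases a with
      | true =>
          obtain ⟨e0, e1⟩ := vecW_true q t
          rw [e0, e1]
          refine ⟨by nlinarith, by nlinarith, by nlinarith⟩
      | false =>
          obtain ⟨e0, e1⟩ := vecW_false q t
          rw [e0, e1]
          refine ⟨by nlinarith, by nlinarith, by nlinarith⟩

lemma vecW_sign_nil (q : ℝ) : (q - 1) * vecW q [] 0 = vecW q [] 1 := by
  simp [vecW]; ring

lemma vecW_sign_true (q : ℝ) (hq : 2 < q) (u : List Bool) :
    vecW q (true :: u) 1 < (q - 1) * vecW q (true :: u) 0 := by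
  obtain ⟨h1, h2, h3⟩ := vecW_inv q hq u
  obtain ⟨e0, e1⟩ := vecW_true q u
  rw [e0, e1]
  nlinarith

lemma vecW_sign_false (q : ℝ) (hq : 2 < q) (u : List Bool) :
    (q - 1) * vecW q (false :: u) 0 < vecW q (false :: u) 1 := by
  obtain ⟨h1, h2, h3⟩ := vecW_inv q hq u
  obtain ⟨e0, e1⟩ := vecW_false q u
  rw [e0, e1]
  nlinarith

lemma vecW_inj (q : ℝ) (hq : 2 < q) :
    ∀ u u' : List Bool, vecW q u = vecW q u' → u = u' := by
  intro u
  induction u with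
  | nil =>
      intro u' h
      cases u' with
      | nil => rfl
      | cons a t =>
          exfalso
          have hnil := vecW_sign_nil q
          cases a with
          | true =>
              have := vecW_sign_true q hq t
              rw [← h] at this; linarith [hnil]
          | false =>
              have := vecW_sign_false q hq t
              rw [← h] at this; linarith [hnil]
  | cons a t ih =>
      intro u' h
      cases u' with
      | nil =>
          exfalso
          have hnil := vecW_sign_nil q
          cases a with
          | true =>
              have := vecW_sign_true q hq t
              rw [h] at this; linarith [hnil]
          | false =>
              have := vecW_sign_false q hq t
              rw [h] at this; linarith [hnil]
      | cons a' t' =>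
          have h0 := congrFun h 0
          have h1 := congrFun h 1
          have hq1 : (0:ℝ) < q - 1 := by linarith
          have hq2 : (0:ℝ) < q - 2 := by linarith
          cases a with
          | true =>
              cases a' with
              | false =>
                  exfalso
                  have hT := vecW_sign_true q hq t
                  have hF := vecW_sign_false q hq t'
                  rw [h] at hT; linarith
              | true =>
                  obtain ⟨e0, e1⟩ := vecW_true q t
                  obtain ⟨f0, f1⟩ := vecW_true q t'
                  rw [e0, f0] at h0
                  rw [e1, f1] at h1
                  have hx : vecW q t 0 = vecW q t' 0 := by
                    have := mul_left_cancel₀ (ne_of_gt hq1) h0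
                    exact this
                  have hy : vecW q t 1 = vecW q t' 1 := by
                    rw [hx] at h1
                    have h1' : (q - 2) * vecW q t 1 = (q - 2) * vecW q t' 1 := by linarith
                    exact mul_left_cancel₀ (ne_of_gt hq2) h1'
                  have ht : vecW q t = vecW q t' := by
                    funext i
                    fin_cases i
                    · exact hx
                    · exact hy
                  rw [ih t' ht]
          | false =>
              cases a' with
              | true =>
                  exfalso
                  have hF := vecW_sign_false q hq t
                  have hT := vecW_sign_true q hq t'
                  rw [h] at hF; linarith
              | false =>
                  obtain ⟨e0, e1⟩ := vecW_false q t
                  obtain ⟨f0, f1⟩ := vecW_false q t'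
                  rw [e0, f0] at h0
                  rw [e1, f1] at h1
                  have hq1sq : ((q - 1) ^ 2 : ℝ) ≠ 0 := by positivity
                  have hy : vecW q t 1 = vecW q t' 1 :=
                    mul_left_cancel₀ hq1sq h1
                  have hx : vecW q t 0 = vecW q t' 0 := by
                    rw [hy] at h0; linarith
                  have ht : vecW q t = vecW q t' := by
                    funext i
                    fin_cases i
                    · exact hx
                    · exact hy
                  rw [ih t' ht]

lemma vecW_eq_prod (q : ℝ) :
    ∀ u : List Bool,
      vecW q u =
        ((u.map fun c => if c = true then !![q - 1, 0; 1, q - 2] else !![1, q - 2; 0, (q - 1) ^ 2]).prod).mulVec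
          ![q * (q - 1), q * (q - 1) ^ 2] := by
  intro u
  induction u with
  | nil => simp [vecW]
  | cons a t ih =>
      simp only [List.map_cons, List.prod_cons, ← Matrix.mulVec_mulVec, ← ih]
      rfl

/-- for `q > 2`, `B = [[q-1,0],[1,q-2]]` and `D = [[1,q-2],[0,(q-1)²]]`,
distinct words (of arbitrary lengths) act differently on `v₀ = (q(q-1), q(q-1)²)ᵀ`. -/
theorem free_action_q_gt_two (q : ℝ) (hq : 2 < q) (w w' : List Bool) (hne : w ≠ w') :
    (wordMatrix !![q - 1, 0; 1, q - 2] !![1, q - 2; 0, (q - 1) ^ 2] w).mulVec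
        ![q * (q - 1), q * (q - 1) ^ 2]
      ≠ (wordMatrix !![q - 1, 0; 1, q - 2] !![1, q - 2; 0, (q - 1) ^ 2] w').mulVec
          ![q * (q - 1), q * (q - 1) ^ 2] := by
  intro h
  have key : ∀ v : List Bool,
      (wordMatrix !![q - 1, 0; 1, q - 2] !![1, q - 2; 0, (q - 1) ^ 2] v).mulVec
        ![q * (q - 1), q * (q - 1) ^ 2] = vecW q v.reverse := by
    intro v
    rw [vecW_eq_prod, wordMatrix, List.map_reverse]
  rw [key w, key w'] at h
  have := vecW_inj q hq _ _ h
  exact hne (List.reverse_injective this)
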